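/- arXiv:2502.02652 — 3 statements merged into one kernel-verified Lean document; each statement's English description precedes it below -/
import Mathlib

section
/- For any real r ≥ 0, x ≥ 0 with x < r, the tail of the exponential series starting at index ⌈r⌉ is bounded by (e x / r)^r: ∑_{l ≥ r} x^l / l! ≤ (e x / r)^r, by the intermediate bound ∑_{l ≥ r} x^l/l! ≤ α^{-r} e^{xα} for every α > 1. -/
/-- For a natural number `r` and real `0 < x < r`, the tail of the exponential series
starting at index `r` satisfies `∑_{l ≥ r} x^l/l! ≤ α^{-r} e^{xα}` for every `α > 1`,
and consequently `∑_{l ≥ r} x^l/l! ≤ (e x / r)^r`. -/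
theorem exp_series_tail_bound (r : ℕ) (x : ℝ) (hx : 0 < x) (hxr : x < r) :
    (∀ α : ℝ, 1 < α →
      ∑' l : ℕ, x ^ (r + l) / (Nat.factorial (r + l) : ℝ) ≤
        α ^ (-(r : ℝ)) * Real.exp (x * α)) ∧
    ∑' l : ℕ, x ^ (r + l) / (Nat.factorial (r + l) : ℝ) ≤
      (Real.exp 1 * x / (r : ℝ)) ^ r := by
  have hr : 0 < (r : ℝ) := lt_trans hx hxr
  have main : ∀ α : ℝ, 1 < α →
      ∑' l : ℕ, x ^ (r + l) / (Nat.factorial (r + l) : ℝ) ≤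
        α ^ (-(r : ℝ)) * Real.exp (x * α) := by
    intro α hα
    have hα0 : 0 < α := lt_trans one_pos hα
    have hinj : Function.Injective (fun l : ℕ => r + l) := add_right_injective r
    have hsum1 : Summable (fun l : ℕ => x ^ (r + l) / (Nat.factorial (r + l) : ℝ)) :=
      (Real.summable_pow_div_factorial x).comp_injective hinj
    have hsum2 : Summable (fun l : ℕ => (x * α) ^ (r + l) / (Nat.factorial (r + l) : ℝ)) :=
      (Real.summable_pow_div_factorial (x * α)).comp_injective hinj
    have hrpow : α ^ (-(r : ℝ)) = (α ^ r)⁻¹ := by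
      rw [← Real.rpow_natCast α r, ← Real.rpow_neg hα0.le]
    -- step 1: termwise bound
    have step1 : ∑' l : ℕ, x ^ (r + l) / (Nat.factorial (r + l) : ℝ) ≤
        ∑' l : ℕ, α ^ (-(r : ℝ)) * ((x * α) ^ (r + l) / (Nat.factorial (r + l) : ℝ)) := by
      apply Summable.tsum_le_tsum _ hsum1 (hsum2.mul_left _)
      intro l
      have key : α ^ (-(r : ℝ)) * ((x * α) ^ (r + l) / (Nat.factorial (r + l) : ℝ)) =
          α ^ l * (x ^ (r + l) / (Nat.factorial (r + l) : ℝ)) := by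
        rw [hrpow, mul_pow, pow_add α r l]
        field_simp
      rw [key]
      exact le_mul_of_one_le_left (by positivity) (one_le_pow₀ hα.le)
    have step2 : ∑' l : ℕ, (x * α) ^ (r + l) / (Nat.factorial (r + l) : ℝ) ≤
        Real.exp (x * α) := by
      have : Real.exp (x * α) = ∑' n : ℕ, (x * α) ^ n / (Nat.factorial n : ℝ) := by
        rw [Real.exp_eq_exp_ℝ, NormedSpace.exp_eq_tsum_div]
      rw [this]
      refine Summable.tsum_le_tsum_of_inj (fun l : ℕ => r + l) hinj
        (fun c _ => by positivity) (fun l => le_refl _) hsum2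
        (Real.summable_pow_div_factorial (x * α))
    calc ∑' l : ℕ, x ^ (r + l) / (Nat.factorial (r + l) : ℝ)
        ≤ ∑' l : ℕ, α ^ (-(r : ℝ)) * ((x * α) ^ (r + l) / (Nat.factorial (r + l) : ℝ)) := step1
      _ = α ^ (-(r : ℝ)) * ∑' l : ℕ, (x * α) ^ (r + l) / (Nat.factorial (r + l) : ℝ) :=
          tsum_mul_left
      _ ≤ α ^ (-(r : ℝ)) * Real.exp (x * α) := by
          exact mul_le_mul_of_nonneg_left step2 (Real.rpow_nonneg hα0.le _)
  refine ⟨main, ?_⟩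
  have hα : 1 < (r : ℝ) / x := (one_lt_div hx).mpr hxr
  have h := main ((r : ℝ) / x) hα
  have hxα : x * ((r : ℝ) / x) = (r : ℝ) := by field_simp
  rw [hxα] at h
  refine h.trans (le_of_eq ?_)
  have hpos : 0 < (r : ℝ) / x := lt_trans one_pos hα
  have h1 : ((r : ℝ) / x) ^ (-(r : ℝ)) = (x / r) ^ r := by
    rw [Real.rpow_neg hpos.le, Real.rpow_natCast, ← inv_pow, inv_div]
  have h2 : Real.exp (r : ℝ) = Real.exp 1 ^ r := by
    rw [← Real.exp_nat_mul, mul_one]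
  rw [h1, h2, ← mul_pow]
  congr 1
  field_simp
end

section
/- On the d-dimensional lattice Z^d with Euclidean-like graph distance, for any α > d there exists a constant K such that for all distinct u, v, ∑_{k ≠ u, v} (e^{-μ d(u,k)}/d(u,k)^α)(e^{-μ d(k,v)}/d(k,v)^α) ≤ K e^{-μ d(u,v)}/d(u,v)^α. -/
/-- The ℓ¹ (graph) distance on the lattice `ℤ^d`. -/
noncomputable def l1dist {d : ℕ} (u v : Fin d → ℤ) : ℝ :=
  ∑ i, |(u i : ℝ) - (v i : ℝ)|

namespace RPLaux

open Real Finset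

variable {d : ℕ}

lemma l1dist_nonneg (u v : Fin d → ℤ) : 0 ≤ l1dist u v :=
  Finset.sum_nonneg fun _ _ => abs_nonneg _

lemma one_le_l1dist {u v : Fin d → ℤ} (h : u ≠ v) : 1 ≤ l1dist u v := by
  obtain ⟨i, hi⟩ := Function.ne_iff.mp h
  have h0 : u i - v i ≠ 0 := sub_ne_zero.mpr hi
  have h1 : (1 : ℤ) ≤ |u i - v i| := Int.one_le_abs h0
  have h2 : (1 : ℝ) ≤ |(u i : ℝ) - (v i : ℝ)| := by
    have : ((|u i - v i| : ℤ) : ℝ) = |(u i : ℝ) - (v i : ℝ)| := by push_cast; ring_nf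
    calc (1 : ℝ) = ((1 : ℤ) : ℝ) := by norm_num
      _ ≤ ((|u i - v i| : ℤ) : ℝ) := by exact_mod_cast h1
      _ = |(u i : ℝ) - (v i : ℝ)| := this
  refine le_trans h2 ?_
  unfold l1dist
  exact Finset.single_le_sum (f := fun j => |(u j : ℝ) - (v j : ℝ)|)
    (fun j _ => abs_nonneg _) (Finset.mem_univ i)

lemma l1dist_triangle (u k v : Fin d → ℤ) : l1dist u v ≤ l1dist u k + l1dist k v := by
  unfold l1dist
  rw [← Finset.sum_add_distrib]
  exact Finset.sum_le_sum fun i _ => abs_sub_le _ _ _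

/-- Pointwise key estimate. -/
lemma term_bound {μ α a b D : ℝ} (hμ : 0 < μ) (hα : 0 < α)
    (ha : 1 ≤ a) (hb : 1 ≤ b) (hD : 1 ≤ D) (htri : D ≤ a + b) :
    Real.exp (-μ * a) / a ^ α * (Real.exp (-μ * b) / b ^ α) ≤
      2 ^ α * (Real.exp (-μ * D) / D ^ α) * (1 / a ^ α + 1 / b ^ α) := by
  have ha0 : (0 : ℝ) < a := lt_of_lt_of_le one_pos ha
  have hb0 : (0 : ℝ) < b := lt_of_lt_of_le one_pos hb
  have hD0 : (0 : ℝ) < D := lt_of_lt_of_le one_pos hD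
  have haα : (0 : ℝ) < a ^ α := Real.rpow_pos_of_pos ha0 α
  have hbα : (0 : ℝ) < b ^ α := Real.rpow_pos_of_pos hb0 α
  have hDα : (0 : ℝ) < D ^ α := Real.rpow_pos_of_pos hD0 α
  have h2α : (0 : ℝ) < (2 : ℝ) ^ α := Real.rpow_pos_of_pos two_pos α
  have hexp : Real.exp (-μ * a) * Real.exp (-μ * b) ≤ Real.exp (-μ * D) := by
    rw [← Real.exp_add]
    apply Real.exp_le_exp.mpr
    nlinarith
  have hpoly : 1 / (a ^ α * b ^ α) ≤ 2 ^ α / D ^ α * (1 / a ^ α + 1 / b ^ α) := by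
    have key : ∀ x y : ℝ, 1 ≤ x → 1 ≤ y → x ≤ y → D ≤ x + y →
        1 / (x ^ α * y ^ α) ≤ 2 ^ α / D ^ α * (1 / x ^ α + 1 / y ^ α) := by
      intro x y hx hy hxy htri'
      have hx0 : (0 : ℝ) < x := lt_of_lt_of_le one_pos hx
      have hy0 : (0 : ℝ) < y := lt_of_lt_of_le one_pos hy
      have hxα : (0 : ℝ) < x ^ α := Real.rpow_pos_of_pos hx0 α
      have hyα : (0 : ℝ) < y ^ α := Real.rpow_pos_of_pos hy0 α
      have hDy : D ≤ 2 * y := by nlinarith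
      have h1 : D ^ α ≤ (2 * y) ^ α := Real.rpow_le_rpow (le_of_lt hD0) hDy (le_of_lt hα)
      have h2 : (2 * y : ℝ) ^ α = 2 ^ α * y ^ α := Real.mul_rpow (by norm_num) (le_of_lt hy0)
      have h3 : D ^ α ≤ 2 ^ α * y ^ α := by rw [← h2]; exact h1
      -- 1/(x^α y^α) ≤ 2^α/(D^α) * 1/x^α
      have h4 : 1 / (x ^ α * y ^ α) ≤ 2 ^ α / D ^ α * (1 / x ^ α) := by
        rw [div_mul_div_comm, div_le_div_iff₀ (by positivity) (by positivity)]
        nlinarith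
      have h5 : (0 : ℝ) ≤ 2 ^ α / D ^ α * (1 / y ^ α) := by positivity
      nlinarith [h4, h5]
    rcases le_total a b with h | h
    · exact key a b ha hb h htri
    · have := key b a hb ha h (by linarith)
      calc 1 / (a ^ α * b ^ α) = 1 / (b ^ α * a ^ α) := by ring_nf
        _ ≤ 2 ^ α / D ^ α * (1 / b ^ α + 1 / a ^ α) := this
        _ = 2 ^ α / D ^ α * (1 / a ^ α + 1 / b ^ α) := by ring
  have hL : Real.exp (-μ * a) / a ^ α * (Real.exp (-μ * b) / b ^ α)
      = Real.exp (-μ * a) * Real.exp (-μ * b) * (1 / (a ^ α * b ^ α)) := by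
    field_simp
  rw [hL]
  have h1 : Real.exp (-μ * a) * Real.exp (-μ * b) * (1 / (a ^ α * b ^ α))
      ≤ Real.exp (-μ * D) * (2 ^ α / D ^ α * (1 / a ^ α + 1 / b ^ α)) := by
    apply mul_le_mul hexp hpoly (by positivity) (le_of_lt (Real.exp_pos _))
  calc Real.exp (-μ * a) * Real.exp (-μ * b) * (1 / (a ^ α * b ^ α))
      ≤ Real.exp (-μ * D) * (2 ^ α / D ^ α * (1 / a ^ α + 1 / b ^ α)) := h1
    _ = 2 ^ α * (Real.exp (-μ * D) / D ^ α) * (1 / a ^ α + 1 / b ^ α) := by ring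

/-- AM–GM based bound: `|m|₁^{-α} ≤ 2^α ∏ᵢ (1+|mᵢ|)^{-α/d}`. -/
lemma poly_bound (hd : 1 ≤ d) {α : ℝ} (hα : 0 < α) (m : Fin d → ℤ)
    (hm : 1 ≤ ∑ i, |((m i : ℤ) : ℝ)|) :
    1 / (∑ i, |((m i : ℤ) : ℝ)|) ^ α ≤ 2 ^ α * ∏ i, (1 + |((m i : ℤ) : ℝ)|) ^ (-(α / d)) := by
  have hd0 : (0 : ℝ) < d := by exact_mod_cast hd
  set s : ℝ := ∑ i, |((m i : ℤ) : ℝ)| with hs_def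
  have hs1 : 1 ≤ s := hm
  have hs0 : (0 : ℝ) < s := lt_of_lt_of_le one_pos hs1
  set z : Fin d → ℝ := fun i => 1 + |((m i : ℤ) : ℝ)| with hz_def
  have hz0 : ∀ i, (0 : ℝ) < z i := fun i => by positivity
  set G : ℝ := ∏ i, z i ^ ((1 : ℝ) / d) with hG_def
  have hG0 : (0 : ℝ) < G :=
    Finset.prod_pos fun i _ => Real.rpow_pos_of_pos (hz0 i) _
  -- AM-GM
  have hamgm : G ≤ ∑ i, (1 / (d : ℝ)) * z i := by
    apply Real.geom_mean_le_arith_mean_weighted Finset.univ (fun _ => (1 : ℝ) / d) z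
    · intro i _; positivity
    · simp [Finset.card_univ]
      field_simp
    · intro i _; exact le_of_lt (hz0 i)
  have hsum : ∑ i, (1 / (d : ℝ)) * z i ≤ 2 * s := by
    have hdne : (d : ℝ) ≠ 0 := ne_of_gt hd0
    have : ∑ i, (1 / (d : ℝ)) * z i = 1 + (1 / (d : ℝ)) * s := by
      simp only [hz_def, mul_add, Finset.sum_add_distrib]
      rw [Finset.sum_const, Finset.card_univ, Fintype.card_fin, ← Finset.mul_sum, ← hs_def,
        nsmul_eq_mul]
      field_simp
    rw [this]
    have h1 : (1 / (d : ℝ)) * s ≤ s := by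
      have : (1 / (d : ℝ)) ≤ 1 := by
        rw [div_le_one hd0]; exact_mod_cast hd
      nlinarith
    nlinarith
  have hG2s : G ≤ 2 * s := le_trans hamgm hsum
  -- raise to power α
  have hGα : G ^ α ≤ 2 ^ α * s ^ α := by
    calc G ^ α ≤ (2 * s) ^ α := Real.rpow_le_rpow (le_of_lt hG0) hG2s (le_of_lt hα)
      _ = 2 ^ α * s ^ α := Real.mul_rpow (by norm_num) (le_of_lt hs0)
  have hGαpos : (0 : ℝ) < G ^ α := Real.rpow_pos_of_pos hG0 α
  have hsαpos : (0 : ℝ) < s ^ α := Real.rpow_pos_of_pos hs0 α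
  have hmain : 1 / s ^ α ≤ 2 ^ α / G ^ α := by
    rw [div_le_div_iff₀ hsαpos hGαpos]
    nlinarith
  -- rewrite 2^α / G^α as the RHS
  have hGα_eq : G ^ α = ∏ i, z i ^ (α / d) := by
    rw [hG_def, ← Real.finset_prod_rpow Finset.univ (fun i => z i ^ ((1 : ℝ) / d))
      (fun i _ => Real.rpow_nonneg (le_of_lt (hz0 i)) _) α]
    apply Finset.prod_congr rfl
    intro i _
    rw [← Real.rpow_mul (le_of_lt (hz0 i))]
    congr 1
    ring
  have hprod_pos : (0 : ℝ) < ∏ i, z i ^ (α / d) :=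
    Finset.prod_pos fun i _ => Real.rpow_pos_of_pos (hz0 i) _
  have hinv : (∏ i, z i ^ (α / d))⁻¹ = ∏ i, z i ^ (-(α / d)) := by
    rw [← Finset.prod_inv_distrib]
    apply Finset.prod_congr rfl
    intro i _
    rw [Real.rpow_neg (le_of_lt (hz0 i))]
  calc 1 / s ^ α ≤ 2 ^ α / G ^ α := hmain
    _ = 2 ^ α * (∏ i, z i ^ (α / d))⁻¹ := by rw [hGα_eq, div_eq_mul_inv]
    _ = 2 ^ α * ∏ i, z i ^ (-(α / d)) := by rw [hinv]

/-- Summability over `ℤ` of `(1+|j|)^{-p}` for `p > 1`. -/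
lemma summable_g {p : ℝ} (hp : 1 < p) :
    Summable fun j : ℤ => (1 + |(j : ℝ)|) ^ (-p) := by
  have hnat : Summable fun n : ℕ => (1 + (n : ℝ)) ^ (-p) := by
    have h : Summable fun n : ℕ => (n : ℝ) ^ (-p) :=
      Real.summable_nat_rpow.mpr (by linarith)
    have h2 : Summable fun n : ℕ => ((n + 1 : ℕ) : ℝ) ^ (-p) :=
      (summable_nat_add_iff 1).mpr h
    apply h2.congr
    intro n
    push_cast
    ring_nf
  apply Summable.of_nat_of_neg
  · apply hnat.congr
    intro n
    norm_num
  · apply hnat.congr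
    intro n
    push_cast
    rw [abs_neg, abs_of_nonneg (by positivity : (0:ℝ) ≤ (n : ℝ))]

/-- Summability of products over the lattice. -/
lemma summable_pi_prod (n : ℕ) (g : ℤ → ℝ) (hg0 : ∀ j, 0 ≤ g j) (hg : Summable g) :
    Summable fun m : Fin n → ℤ => ∏ i, g (m i) := by
  induction n with
  | zero =>
      haveI : Subsingleton (Fin 0 → ℤ) :=
        ⟨fun a b => funext fun i => i.elim0⟩
      haveI : Finite (Fin 0 → ℤ) := Finite.of_subsingleton
      exact Summable.of_finite
  | succ n ih =>
      have h1 : Summable fun x : ℤ × (Fin n → ℤ) => g x.1 * ∏ i, g (x.2 i) :=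
        Summable.mul_of_nonneg (f := g) (g := fun m : Fin n → ℤ => ∏ i, g (m i))
          hg ih (fun j => hg0 j) (fun m => Finset.prod_nonneg fun i _ => hg0 _)
      refine ((Fin.consEquiv (fun _ : Fin (n + 1) => ℤ)).summable_iff).mp ?_
      apply h1.congr
      intro x
      simp only [Function.comp_apply, Fin.consEquiv_apply]
      rw [Fin.prod_univ_succ]
      simp


lemma l1dist_comm (u v : Fin d → ℤ) : l1dist u v = l1dist v u := by
  unfold l1dist
  exact Finset.sum_congr rfl fun i _ => abs_sub_comm _ _

lemma l1dist_eq_sum_sub (w k : Fin d → ℤ) :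
    l1dist w k = ∑ i, |(((k - w) i : ℤ) : ℝ)| := by
  unfold l1dist
  refine Finset.sum_congr rfl fun i _ => ?_
  have h : (((k - w) i : ℤ) : ℝ) = (k i : ℝ) - (w i : ℝ) := by
    simp [Pi.sub_apply]
  rw [h, abs_sub_comm]

end RPLaux

open RPLaux Real

/-- Reproducing property on `ℤ^d`: for any `α > d` and `μ > 0`, there is a constant
`K` such that for all distinct `u, v`,
`∑_{k ≠ u,v} (e^{-μ d(u,k)}/d(u,k)^α)(e^{-μ d(k,v)}/d(k,v)^α) ≤ K e^{-μ d(u,v)}/d(u,v)^α`. -/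
theorem reproducing_property_lattice (d : ℕ) (hd : 1 ≤ d) (μ α : ℝ)
    (hμ : 0 < μ) (hα : (d : ℝ) < α) :
    ∃ K : ℝ, 0 < K ∧ ∀ u v : Fin d → ℤ, u ≠ v →
      ∑' k : {k : Fin d → ℤ // k ≠ u ∧ k ≠ v},
          (Real.exp (-μ * l1dist u (k : Fin d → ℤ)) / (l1dist u (k : Fin d → ℤ)) ^ α) *
            (Real.exp (-μ * l1dist (k : Fin d → ℤ) v) / (l1dist (k : Fin d → ℤ) v) ^ α)
        ≤ K * Real.exp (-μ * l1dist u v) / (l1dist u v) ^ α := by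
  have hdnat : 0 < d := hd
  have hd0 : (0 : ℝ) < d := by exact_mod_cast hdnat
  have hα0 : (0 : ℝ) < α := hd0.trans hα
  have hp : 1 < α / d := (one_lt_div hd0).mpr hα
  have h2α : (0 : ℝ) < (2 : ℝ) ^ α := Real.rpow_pos_of_pos two_pos α
  set g : ℤ → ℝ := fun j => (1 + |(j : ℝ)|) ^ (-(α / (d : ℝ))) with hgdef
  have hg0 : ∀ j, 0 ≤ g j := fun j => Real.rpow_nonneg (by positivity) _
  have hgsum : Summable g := summable_g hp
  set G : (Fin d → ℤ) → ℝ := fun m => ∏ i, g (m i) with hGdef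
  have hG0 : ∀ m, 0 ≤ G m := fun m => Finset.prod_nonneg fun i _ => hg0 _
  have hGsum : Summable G := summable_pi_prod d g hg0 hgsum
  set S := ∑' m, G m with hSdef
  have hS0 : 0 ≤ S := tsum_nonneg hG0
  have hK0 : 0 < 2 ^ α * 2 ^ α * 2 * S + 1 := by nlinarith
  refine ⟨2 ^ α * 2 ^ α * 2 * S + 1, hK0, ?_⟩
  intro u v huv
  have hD1 : 1 ≤ l1dist u v := one_le_l1dist huv
  have hD0 : (0 : ℝ) < l1dist u v := lt_of_lt_of_le one_pos hD1
  have hDα : (0 : ℝ) < l1dist u v ^ α := Real.rpow_pos_of_pos hD0 α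
  have hE : (0 : ℝ) < Real.exp (-μ * l1dist u v) := Real.exp_pos _
  have ha1 : ∀ k : {k : Fin d → ℤ // k ≠ u ∧ k ≠ v}, 1 ≤ l1dist u k.val :=
    fun k => one_le_l1dist (Ne.symm k.2.1)
  have hb1 : ∀ k : {k : Fin d → ℤ // k ≠ u ∧ k ≠ v}, 1 ≤ l1dist k.val v :=
    fun k => one_le_l1dist k.2.2
  -- the two polynomial tail bounds
  have hΦa_le : ∀ k : {k : Fin d → ℤ // k ≠ u ∧ k ≠ v},
      1 / (l1dist u k.val) ^ α ≤ 2 ^ α * G (k.val - u) := by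
    intro k
    have hm : 1 ≤ ∑ i, |(((k.val - u) i : ℤ) : ℝ)| := by
      rw [← l1dist_eq_sum_sub]; exact ha1 k
    have hpb := poly_bound hd hα0 (k.val - u) hm
    rw [l1dist_eq_sum_sub u k.val]
    exact hpb
  have hΦb_le : ∀ k : {k : Fin d → ℤ // k ≠ u ∧ k ≠ v},
      1 / (l1dist k.val v) ^ α ≤ 2 ^ α * G (k.val - v) := by
    intro k
    have hm : 1 ≤ ∑ i, |(((k.val - v) i : ℤ) : ℝ)| := by
      rw [← l1dist_eq_sum_sub]
      rw [l1dist_comm]; exact hb1 k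
    have hpb := poly_bound hd hα0 (k.val - v) hm
    rw [l1dist_comm, l1dist_eq_sum_sub v k.val]
    exact hpb
  -- injective translations
  have hea : Function.Injective
      (fun k : {k : Fin d → ℤ // k ≠ u ∧ k ≠ v} => k.val - u) := by
    intro x y h
    apply Subtype.ext
    have := congrArg (· + u) h
    simpa using this
  have heb : Function.Injective
      (fun k : {k : Fin d → ℤ // k ≠ u ∧ k ≠ v} => k.val - v) := by
    intro x y h
    apply Subtype.ext
    have := congrArg (· + v) h
    simpa using this
  -- summability of the tails
  have hΦa_sum : Summable (fun k : {k : Fin d → ℤ // k ≠ u ∧ k ≠ v} =>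
      1 / (l1dist u k.val) ^ α) := by
    apply Summable.of_nonneg_of_le
      (fun k => div_nonneg zero_le_one (Real.rpow_nonneg (l1dist_nonneg _ _) _))
      hΦa_le
    exact (hGsum.comp_injective hea).mul_left _
  have hΦb_sum : Summable (fun k : {k : Fin d → ℤ // k ≠ u ∧ k ≠ v} =>
      1 / (l1dist k.val v) ^ α) := by
    apply Summable.of_nonneg_of_le
      (fun k => div_nonneg zero_le_one (Real.rpow_nonneg (l1dist_nonneg _ _) _))
      hΦb_le
    exact (hGsum.comp_injective heb).mul_left _
  -- the tail sums are bounded by 2^α S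
  have hA : (∑' k : {k : Fin d → ℤ // k ≠ u ∧ k ≠ v}, 1 / (l1dist u k.val) ^ α)
      ≤ 2 ^ α * S := by
    have h1 := Summable.tsum_le_tsum_of_inj (fun k : {k : Fin d → ℤ // k ≠ u ∧ k ≠ v} => k.val - u)
      hea (fun c _ => by positivity) hΦa_le hΦa_sum (hGsum.mul_left (2 ^ α))
    rw [tsum_mul_left] at h1
    exact h1
  have hB : (∑' k : {k : Fin d → ℤ // k ≠ u ∧ k ≠ v}, 1 / (l1dist k.val v) ^ α)
      ≤ 2 ^ α * S := by
    have h1 := Summable.tsum_le_tsum_of_inj (fun k : {k : Fin d → ℤ // k ≠ u ∧ k ≠ v} => k.val - v)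
      heb (fun c _ => by positivity) hΦb_le hΦb_sum (hGsum.mul_left (2 ^ α))
    rw [tsum_mul_left] at h1
    exact h1
  -- pointwise bound on the summand
  have hF_le : ∀ k : {k : Fin d → ℤ // k ≠ u ∧ k ≠ v},
      (Real.exp (-μ * l1dist u (k : Fin d → ℤ)) / (l1dist u (k : Fin d → ℤ)) ^ α) *
        (Real.exp (-μ * l1dist (k : Fin d → ℤ) v) / (l1dist (k : Fin d → ℤ) v) ^ α)
      ≤ 2 ^ α * (Real.exp (-μ * l1dist u v) / (l1dist u v) ^ α) *
          (1 / (l1dist u k.val) ^ α + 1 / (l1dist k.val v) ^ α) := by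
    intro k
    exact term_bound hμ hα0 (ha1 k) (hb1 k) hD1 (l1dist_triangle u k.val v)
  have hF0 : ∀ k : {k : Fin d → ℤ // k ≠ u ∧ k ≠ v},
      0 ≤ (Real.exp (-μ * l1dist u (k : Fin d → ℤ)) / (l1dist u (k : Fin d → ℤ)) ^ α) *
        (Real.exp (-μ * l1dist (k : Fin d → ℤ) v) / (l1dist (k : Fin d → ℤ) v) ^ α) := by
    intro k
    apply mul_nonneg
    · exact div_nonneg (Real.exp_pos _).le (Real.rpow_nonneg (l1dist_nonneg _ _) _)
    · exact div_nonneg (Real.exp_pos _).le (Real.rpow_nonneg (l1dist_nonneg _ _) _)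
  have hBndSum : Summable (fun k : {k : Fin d → ℤ // k ≠ u ∧ k ≠ v} =>
      2 ^ α * (Real.exp (-μ * l1dist u v) / (l1dist u v) ^ α) *
        (1 / (l1dist u k.val) ^ α + 1 / (l1dist k.val v) ^ α)) :=
    (hΦa_sum.add hΦb_sum).mul_left _
  have hFsum : Summable (fun k : {k : Fin d → ℤ // k ≠ u ∧ k ≠ v} =>
      (Real.exp (-μ * l1dist u (k : Fin d → ℤ)) / (l1dist u (k : Fin d → ℤ)) ^ α) *
        (Real.exp (-μ * l1dist (k : Fin d → ℤ) v) / (l1dist (k : Fin d → ℤ) v) ^ α)) :=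
    Summable.of_nonneg_of_le hF0 hF_le hBndSum
  calc ∑' k : {k : Fin d → ℤ // k ≠ u ∧ k ≠ v},
        (Real.exp (-μ * l1dist u (k : Fin d → ℤ)) / (l1dist u (k : Fin d → ℤ)) ^ α) *
          (Real.exp (-μ * l1dist (k : Fin d → ℤ) v) / (l1dist (k : Fin d → ℤ) v) ^ α)
      ≤ ∑' k : {k : Fin d → ℤ // k ≠ u ∧ k ≠ v},
          2 ^ α * (Real.exp (-μ * l1dist u v) / (l1dist u v) ^ α) *
            (1 / (l1dist u k.val) ^ α + 1 / (l1dist k.val v) ^ α) :=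
        Summable.tsum_le_tsum hF_le hFsum hBndSum
    _ = 2 ^ α * (Real.exp (-μ * l1dist u v) / (l1dist u v) ^ α) *
          ((∑' k : {k : Fin d → ℤ // k ≠ u ∧ k ≠ v}, 1 / (l1dist u k.val) ^ α) +
           (∑' k : {k : Fin d → ℤ // k ≠ u ∧ k ≠ v}, 1 / (l1dist k.val v) ^ α)) := by
        rw [tsum_mul_left, Summable.tsum_add hΦa_sum hΦb_sum]
    _ ≤ 2 ^ α * (Real.exp (-μ * l1dist u v) / (l1dist u v) ^ α) *
          (2 ^ α * S + 2 ^ α * S) := by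
        apply mul_le_mul_of_nonneg_left (add_le_add hA hB)
        positivity
    _ = (2 ^ α * 2 ^ α * 2 * S) * (Real.exp (-μ * l1dist u v) / (l1dist u v) ^ α) := by
        ring
    _ ≤ (2 ^ α * 2 ^ α * 2 * S + 1) * (Real.exp (-μ * l1dist u v) / (l1dist u v) ^ α) := by
        have hpos : 0 < Real.exp (-μ * l1dist u v) / (l1dist u v) ^ α := by positivity
        nlinarith
    _ = (2 ^ α * 2 ^ α * 2 * S + 1) * Real.exp (-μ * l1dist u v) / (l1dist u v) ^ α := by
        ring
end

section
/- Iterated GHZ commutator identity: under the hypotheses of the single-commutator identity, with pairwise commuting unitaries Z_1, ..., Z_m each satisfying Z_i|0⟩ = |0⟩ and Z_i D = -D Z_i, one has ⟨ψ| D O |ψ⟩ = 2^{-m} ⟨0| D [[...[O(t), Z_1], ...], Z_m] |0⟩. -/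
/-!
Write `f(A) = ⟪ψ₀, D (A ψ₀)⟫`. If `Z` is an isometry fixing `ψ₀` and anticommuting with `D`, then
`Z†` also fixes `ψ₀`, so `⟪ψ₀, D (Z x)⟫ = -⟪Z† ψ₀, D x⟫ = -⟪ψ₀, D x⟫`; hence `f(A Z - Z A) = 2 f(A)`.
Iterating over `Z₁, …, Zₘ` gives the factor `2^m`, and since `U†` commutes with `D`, moving `U` across
the inner product turns `⟪U ψ₀, D O U ψ₀⟫` into `f(U† O U)`.
-/

open LinearMap

section

variable {𝕜 E : Type*} [RCLike 𝕜] [NormedAddCommGroup E] [InnerProductSpace 𝕜 E]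
  [FiniteDimensional 𝕜 E]

local notation "⟪" x ", " y "⟫" => inner 𝕜 x y

theorem adjoint_apply_eq_self_of_apply_eq_self {Z : Module.End 𝕜 E} (hZ : adjoint Z * Z = 1)
    {ψ : E} (hψ : Z ψ = ψ) : adjoint Z ψ = ψ := by
  simpa [hψ] using congrArg (fun T : Module.End 𝕜 E => T ψ) hZ

theorem inner_apply_commutator_eq_two_mul {D Z : Module.End 𝕜 E} {ψ : E}
    (hZ : adjoint Z * Z = 1) (hψ : Z ψ = ψ) (hZD : Z * D = -(D * Z)) (A : Module.End 𝕜 E) :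
    ⟪ψ, D ((A * Z - Z * A) ψ)⟫ = 2 * ⟪ψ, D (A ψ)⟫ := by
  have hDZ : D (Z (A ψ)) = -Z (D (A ψ)) := by
    simpa using congrArg (fun T : Module.End 𝕜 E => T (A ψ)) (neg_eq_iff_eq_neg.mpr hZD).symm
  have hfix : ⟪ψ, Z (D (A ψ))⟫ = ⟪ψ, D (A ψ)⟫ := by
    rw [← adjoint_inner_left, adjoint_apply_eq_self_of_apply_eq_self hZ hψ]
  rw [LinearMap.sub_apply, Module.End.mul_apply, Module.End.mul_apply, hψ, map_sub, hDZ, inner_sub_right,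
    inner_neg_right, hfix]
  ring

theorem inner_apply_foldl_commutator {D : Module.End 𝕜 E} {ψ : E} (l : List (Module.End 𝕜 E))
    (hl : ∀ Z ∈ l, adjoint Z * Z = 1 ∧ Z ψ = ψ ∧ Z * D = -(D * Z)) (A : Module.End 𝕜 E) :
    ⟪ψ, D ((l.foldl (fun A B => A * B - B * A) A) ψ)⟫ = 2 ^ l.length * ⟪ψ, D (A ψ)⟫ := by
  induction l generalizing A with
  | nil => simp
  | cons Z l ih =>
    obtain ⟨hZ, hψ, hZD⟩ := hl Z List.mem_cons_self
    rw [List.foldl_cons, ih (fun W hW => hl W (List.mem_cons_of_mem _ hW)),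
      inner_apply_commutator_eq_two_mul hZ hψ hZD, List.length_cons, pow_succ, mul_assoc]

theorem inner_apply_conj_eq {D U : Module.End 𝕜 E} (hUD : Commute (adjoint U) D)
    (O : Module.End 𝕜 E) (x : E) :
    ⟪U x, D (O (U x))⟫ = ⟪x, D ((adjoint U * O * U) x)⟫ := by
  rw [← adjoint_inner_right, ← Module.End.mul_apply (adjoint U), hUD.eq]
  rfl

end

theorem ghz_iterated_commutator_identity_general {V : Type*} [NormedAddCommGroup V]
    [InnerProductSpace ℂ V] [FiniteDimensional ℂ V]
    (D U O : Module.End ℂ V) (ψ₀ : V) (m : ℕ) (Z : Fin m → Module.End ℂ V)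
    (hU : LinearMap.adjoint U * U = 1 ∧ U * LinearMap.adjoint U = 1)
    (hZunit : ∀ i, LinearMap.adjoint (Z i) * Z i = 1 ∧ Z i * LinearMap.adjoint (Z i) = 1)
    (hUD : U * D = D * U)
    (hZ0 : ∀ i, Z i ψ₀ = ψ₀)
    (hZD : ∀ i, Z i * D = -(D * Z i)) :
    (inner ℂ (U ψ₀) (D (O (U ψ₀))) : ℂ) =
      (1 / 2 ^ m) * (inner ℂ ψ₀
        (D (((List.ofFn Z).foldl (fun A B => A * B - B * A)
          (LinearMap.adjoint U * O * U)) ψ₀)) : ℂ) := by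
  let u : (Module.End ℂ V)ˣ := ⟨U, adjoint U, hU.2, hU.1⟩
  have hUadj : Commute (adjoint U) D := Commute.units_inv_left (u := u) hUD
  have hZ : ∀ W ∈ List.ofFn Z, adjoint W * W = 1 ∧ W ψ₀ = ψ₀ ∧ W * D = -(D * W) := by
    intro W hW
    obtain ⟨i, rfl⟩ := List.mem_ofFn.mp hW
    exact ⟨(hZunit i).1, hZ0 i, hZD i⟩
  rw [inner_apply_conj_eq hUadj, inner_apply_foldl_commutator _ hZ, List.length_ofFn]
  field_simp

/-- Iterated GHZ commutator identity: with `D` unitary, `U` unitary commuting with `D`,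
and pairwise commuting unitaries `Z₁, …, Zₘ`, each fixing `ψ₀` and anticommuting with
`D`, one has `⟨ψ| D O |ψ⟩ = 2^{-m} ⟨ψ₀| D [[…[O(t), Z₁], …], Zₘ] |ψ₀⟩` where
`O(t) = U† O U` and `ψ = U ψ₀`. -/
theorem ghz_iterated_commutator_identity {V : Type*} [NormedAddCommGroup V]
    [InnerProductSpace ℂ V] [FiniteDimensional ℂ V]
    (D U O : Module.End ℂ V) (ψ₀ : V) (m : ℕ) (Z : Fin m → Module.End ℂ V)
    (hD : LinearMap.adjoint D * D = 1 ∧ D * LinearMap.adjoint D = 1)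
    (hU : LinearMap.adjoint U * U = 1 ∧ U * LinearMap.adjoint U = 1)
    (hZunit : ∀ i, LinearMap.adjoint (Z i) * Z i = 1 ∧ Z i * LinearMap.adjoint (Z i) = 1)
    (hZcomm : ∀ i j, Z i * Z j = Z j * Z i)
    (hUD : U * D = D * U)
    (hZ0 : ∀ i, Z i ψ₀ = ψ₀)
    (hZD : ∀ i, Z i * D = -(D * Z i)) :
    (inner ℂ (U ψ₀) (D (O (U ψ₀))) : ℂ) =
      (1 / 2 ^ m) * (inner ℂ ψ₀
        (D (((List.ofFn Z).foldl (fun A B => A * B - B * A)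
          (LinearMap.adjoint U * O * U)) ψ₀)) : ℂ) :=
  ghz_iterated_commutator_identity_general D U O ψ₀ m Z hU hZunit hUD hZ0 hZD
end
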